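/- arXiv:1812.11939 — 3 statements merged into one kernel-verified Lean document; each statement's English description precedes it below -/
import Mathlib

section
/- Let (X_n) and (X̃_n) be sequences of real-valued random variables on a common probability space with X_n ≥ X̃_n almost surely for all n. If both X_n and X̃_n converge in distribution to the same probability distribution D, then X_n − X̃_n converges in probability (equivalently, in distribution) to 0. -/
/-!
For a bounded, continuous, nondecreasing `f`, the variable `f (X n) - f (X' n)` is almost surely
nonnegative and its mean tends to `∫ f ∂D - ∫ f ∂D = 0`, so it tends to `0` in `L¹`, hence in
probability. Take for `f` the truncation `x ↦ max (-K) (min K x)`. The laws of `X' n` converge, so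
they form a tight family (Prokhorov): outside an event of uniformly small probability,
`|X' n| ≤ r`, and there `X n - X' n ≥ ε` forces the truncations at level `K = r + ε` to differ by
at least `ε`.
-/

open MeasureTheory Filter
open scoped BoundedContinuousFunction ENNReal Topology

section ConvergenceInMeasure

variable {Ω ι : Type*} [MeasurableSpace Ω] {μ : Measure Ω} {l : Filter ι}

theorem tendstoInMeasure_zero_of_integral_tendsto_zero {Y : ι → Ω → ℝ}
    (hY : ∀ i, Integrable (Y i) μ) (hY_nonneg : ∀ i, 0 ≤ᵐ[μ] Y i)
    (h : Tendsto (fun i => ∫ ω, Y i ω ∂μ) l (𝓝 0)) :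
    TendstoInMeasure μ Y l 0 := by
  refine tendstoInMeasure_of_tendsto_eLpNorm one_ne_zero (fun i => (hY i).aestronglyMeasurable)
    aestronglyMeasurable_zero ?_
  have hL1 (i : ι) : eLpNorm (Y i - 0) 1 μ = ENNReal.ofReal (∫ ω, Y i ω ∂μ) := by
    rw [sub_zero, eLpNorm_one_eq_lintegral_enorm,
      ofReal_integral_eq_lintegral_ofReal (hY i) (hY_nonneg i)]
    exact lintegral_congr_ae <| (hY_nonneg i).mono fun ω hω => Real.enorm_of_nonneg hω
  simpa only [hL1, ENNReal.ofReal_zero] using ENNReal.tendsto_ofReal h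

theorem tendstoInMeasure_comp_sub_comp_of_monotone [IsFiniteMeasure μ] {α : Type*}
    [TopologicalSpace α] [MeasurableSpace α] [OpensMeasurableSpace α] [Preorder α]
    {X X' : ι → Ω → α} (hX : ∀ i, Measurable (X i)) (hX' : ∀ i, Measurable (X' i))
    (hdom : ∀ i, X' i ≤ᵐ[μ] X i) {f : α →ᵇ ℝ} (hf : Monotone f) {c : ℝ}
    (hfX : Tendsto (fun i => ∫ ω, f (X i ω) ∂μ) l (𝓝 c))
    (hfX' : Tendsto (fun i => ∫ ω, f (X' i ω) ∂μ) l (𝓝 c)) :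
    TendstoInMeasure μ (fun i ω => f (X i ω) - f (X' i ω)) l 0 := by
  have hint {Y : Ω → α} (hY : Measurable Y) : Integrable (fun ω => f (Y ω)) μ :=
    (f.integrable (μ.map Y)).comp_measurable hY
  refine tendstoInMeasure_zero_of_integral_tendsto_zero
    (fun i => (hint (hX i)).sub (hint (hX' i)))
    (fun i => (hdom i).mono fun ω hω => sub_nonneg.2 (hf hω)) ?_
  simpa only [integral_sub (hint (hX _)) (hint (hX' _)), sub_self] using hfX.sub hfX'

end ConvergenceInMeasure

section Tightness

theorem isTightMeasureSet_range_of_tendsto {E : Type*} [PseudoMetricSpace E] [MeasurableSpace E]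
    [BorelSpace E] [SecondCountableTopology E] [CompleteSpace E] {P : ℕ → ProbabilityMeasure E}
    {P₀ : ProbabilityMeasure E} (h : Tendsto P atTop (𝓝 P₀)) :
    IsTightMeasureSet (Set.range fun n => (P n : Measure E)) := by
  have hcomp : IsCompact (closure (Set.range P)) :=
    h.isCompact_insert_range.of_isClosed_subset isClosed_closure
      (closure_minimal (Set.subset_insert _ _) h.isCompact_insert_range.isClosed)
  refine (isTightMeasureSet_of_isCompact_closure hcomp).subset ?_
  rintro _ ⟨n, rfl⟩
  exact ⟨P n, ⟨n, rfl⟩, rfl⟩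

variable {Ω E : Type*} [MeasurableSpace Ω] {μ : Measure Ω} [IsProbabilityMeasure μ]
  [NormedAddCommGroup E] [MeasurableSpace E] [BorelSpace E] [SecondCountableTopology E]
  [CompleteSpace E]

theorem tendsto_iSup_measure_norm_gt_of_tendsto_integral {Y : ℕ → Ω → E}
    (hY : ∀ n, Measurable (Y n)) {D : Measure E} [IsProbabilityMeasure D]
    (h : ∀ f : E →ᵇ ℝ, Tendsto (fun n => ∫ ω, f (Y n ω) ∂μ) atTop (𝓝 (∫ x, f x ∂D))) :
    Tendsto (fun r : ℝ => ⨆ n, μ {ω | r < ‖Y n ω‖}) atTop (𝓝 0) := by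
  let P (n : ℕ) : ProbabilityMeasure E :=
    ⟨μ.map (Y n), Measure.isProbabilityMeasure_map (hY n).aemeasurable⟩
  have hP : Tendsto P atTop (𝓝 ⟨D, inferInstance⟩) := by
    refine ProbabilityMeasure.tendsto_iff_forall_integral_tendsto.2 fun f => ?_
    simpa only [P, ProbabilityMeasure.coe_mk,
      integral_map (hY _).aemeasurable f.continuous.aestronglyMeasurable] using h f
  have hlaw (r : ℝ) (n : ℕ) : μ.map (Y n) {x | r < ‖x‖} = μ {ω | r < ‖Y n ω‖} :=
    Measure.map_apply (hY n) (measurableSet_lt measurable_const measurable_norm)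
  simpa only [iSup_range, P, ProbabilityMeasure.coe_mk, hlaw] using
    tendsto_measure_norm_gt_of_isTightMeasureSet (isTightMeasureSet_range_of_tendsto hP)

end Tightness

section Clip

noncomputable def clip (K : ℝ) : ℝ →ᵇ ℝ :=
  .ofNormedAddCommGroup (fun x => max (-K) (min K x)) (by fun_prop) |K| fun x => by
    rw [Real.norm_eq_abs, abs_le]
    exact ⟨(neg_le_neg (le_abs_self K)).trans (le_max_left _ _),
      max_le (neg_le_abs K) ((min_le_left _ _).trans (le_abs_self K))⟩

theorem clip_apply (K x : ℝ) : clip K x = max (-K) (min K x) := rfl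

theorem monotone_clip (K : ℝ) : Monotone (clip K) := fun _ _ h =>
  max_le_max le_rfl (min_le_min le_rfl h)

theorem le_clip_sub_clip {K ε x x' : ℝ} (hε : 0 ≤ ε) (hx' : |x'| + ε ≤ K) (hx : x' + ε ≤ x) :
    ε ≤ clip K x - clip K x' := by
  have hx'K : x' + ε ≤ K := by linarith [le_abs_self x']
  have hclip : clip K x' = x' := by
    rw [clip_apply, min_eq_right (by linarith), max_eq_right (by linarith [neg_abs_le x'])]
  rw [hclip, clip_apply]
  linarith [le_max_right (-K) (min K x), le_min hx'K hx]

theorem lt_abs_or_le_abs_clip_sub_clip {r ε x x' : ℝ} (hε₀ : 0 ≤ ε) (hx : x' ≤ x)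
    (hε : ε ≤ |x - x'|) :
    r < |x'| ∨ ε ≤ |clip (r + ε) x - clip (r + ε) x'| := by
  refine (lt_or_ge r |x'|).imp id fun hr => ?_
  rw [abs_of_nonneg (sub_nonneg.2 hx)] at hε
  exact (le_clip_sub_clip hε₀ (by linarith) (by linarith)).trans (le_abs_self _)

end Clip

theorem dominated_same_limit_law_diff_tendsto_zero
    {Ω : Type*} [MeasurableSpace Ω] (μ : Measure Ω) [IsProbabilityMeasure μ]
    (X X' : ℕ → Ω → ℝ) (hX : ∀ n, Measurable (X n)) (hX' : ∀ n, Measurable (X' n))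
    (hdom : ∀ n, ∀ᵐ ω ∂μ, X' n ω ≤ X n ω)
    (D : Measure ℝ) [IsProbabilityMeasure D]
    (hXD : ∀ f : ℝ →ᵇ ℝ,
      Tendsto (fun n => ∫ ω, f (X n ω) ∂μ) atTop (nhds (∫ x, f x ∂D)))
    (hX'D : ∀ f : ℝ →ᵇ ℝ,
      Tendsto (fun n => ∫ ω, f (X' n ω) ∂μ) atTop (nhds (∫ x, f x ∂D))) :
    TendstoInMeasure μ (fun n ω => X n ω - X' n ω) atTop 0 := by
  refine tendstoInMeasure_iff_dist.2 fun ε hε => ENNReal.tendsto_nhds_zero.2 fun δ hδ => ?_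
  have hδ₂ : 0 < δ / 2 := ENNReal.half_pos hδ.ne'
  obtain ⟨r, hr⟩ : ∃ r : ℝ, ⨆ n, μ {ω | r < ‖X' n ω‖} ≤ δ / 2 :=
    (ENNReal.tendsto_nhds_zero.1 (tendsto_iSup_measure_norm_gt_of_tendsto_integral hX' hX'D)
      _ hδ₂).exists
  have hclip := tendstoInMeasure_comp_sub_comp_of_monotone hX hX' hdom (monotone_clip (r + ε))
    (hXD _) (hX'D _)
  filter_upwards [ENNReal.tendsto_nhds_zero.1 (tendstoInMeasure_iff_dist.1 hclip ε hε) _ hδ₂]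
    with n hn
  set C := {ω | ε ≤ dist (clip (r + ε) (X n ω) - clip (r + ε) (X' n ω)) 0}
  have hcover : {ω | ε ≤ dist (X n ω - X' n ω) 0} ≤ᵐ[μ] ({ω | r < ‖X' n ω‖} ∪ C : Set Ω) := by
    filter_upwards [hdom n] with ω hω (hmem : ε ≤ dist _ _)
    show r < ‖X' n ω‖ ∨ ε ≤ dist _ _
    rw [Real.dist_eq, sub_zero] at hmem
    rw [Real.norm_eq_abs, Real.dist_eq, sub_zero]
    exact lt_abs_or_le_abs_clip_sub_clip hε.le hω hmem
  calc μ {ω | ε ≤ dist (X n ω - X' n ω) 0}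
      ≤ μ {ω | r < ‖X' n ω‖} + μ C := (measure_mono_ae hcover).trans (measure_union_le _ _)
    _ ≤ δ / 2 + δ / 2 := add_le_add ((le_iSup (fun n => μ {ω | r < ‖X' n ω‖}) n).trans hr) hn
    _ = δ := ENNReal.add_halves δ
end

section
/- Let 0 < r < 1, c > 0, and a ≥ 0. Then 1 − ∏_{i=0}^{∞} 1/(1 + c·r^{a}·r^{i}) ≤ 2·c·r^{a}/(1 − r). -/
open Real

theorem one_sub_tprod_inv_one_add_le_tsum {ι : Type*} {x : ι → ℝ} (hx : ∀ i, 0 ≤ x i)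
    (hsum : Summable x) : 1 - ∏' i, (1 + x i)⁻¹ ≤ ∑' i, x i := by
  have hpos : ∀ i, 0 < 1 + x i := fun i => by linarith [hx i]
  have hlog : Summable fun i => log (1 + x i) := summable_log_one_add_of_summable hsum
  have hprod : ∏' i, (1 + x i)⁻¹ = exp (-∑' i, log (1 + x i)) := by
    rw [← tsum_neg, ← rexp_tsum_eq_tprod (fun i => inv_pos.2 (hpos i))]
    · simp only [log_inv]
    · simpa only [log_inv] using hlog.neg
  calc 1 - ∏' i, (1 + x i)⁻¹ ≤ ∑' i, log (1 + x i) := by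
        rw [hprod]; linarith [add_one_le_exp (-∑' i, log (1 + x i))]
    _ ≤ ∑' i, x i :=
        hlog.tsum_le_tsum (fun i => by linarith [log_le_sub_one_of_pos (hpos i)]) hsum

theorem one_sub_tprod_shifted_le_general (r c a : ℝ) (hr0 : 0 < r) (hr1 : r < 1)
    (hc : 0 < c) :
    1 - ∏' i : ℕ, 1 / (1 + c * r ^ a * r ^ i) ≤ 2 * c * r ^ a / (1 - r) := by
  have hd : 0 ≤ c * r ^ a := by positivity
  calc 1 - ∏' i : ℕ, 1 / (1 + c * r ^ a * r ^ i) ≤ ∑' i : ℕ, c * r ^ a * r ^ i := by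
        simpa only [one_div] using one_sub_tprod_inv_one_add_le_tsum
          (fun i => by positivity) ((summable_geometric_of_lt_one hr0.le hr1).mul_left _)
    _ = c * r ^ a / (1 - r) := by
        rw [tsum_mul_left, tsum_geometric_of_lt_one hr0.le hr1, div_eq_mul_inv]
    _ ≤ 2 * c * r ^ a / (1 - r) := by
        gcongr
        linarith

theorem one_sub_tprod_shifted_le (r c a : ℝ) (hr0 : 0 < r) (hr1 : r < 1)
    (hc : 0 < c) (ha : 0 ≤ a) :
    1 - ∏' i : ℕ, 1 / (1 + c * r ^ a * r ^ i) ≤ 2 * c * r ^ a / (1 - r) :=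
  one_sub_tprod_shifted_le_general r c a hr0 hr1 hc
end

section
/- Let (X_t), (Y_t), (Z_t) be real random variables with X_t ≤ Y_t + Z_t almost surely for each t, suppose X_t ⇒ D and Y_t ⇒ D for the same distribution D as t → ∞, and Z_t → 0 in probability. Then X_t − Y_t → 0 in probability. -/
open MeasureTheory Filter
open scoped BoundedContinuousFunction ENNReal

/-!
Since `X ≤ Y + Z` and, by Slutsky, `Y + Z` has the same limit law as `X`, it suffices that two
random variables `B ≤ A` with a common limit law are close in probability. For a bounded
monotone `g`, the nonnegative variables `g A - g B` have expectations tending to `0`, so they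
tend to `0` in probability. Taking for `g` a clamp to `[-K, K + ε]`, where `K` bounds `B` with
high probability by tightness, `A - B ≥ ε` forces `g A - g B ≥ ε` outside that small event.
-/

open Topology

namespace BoundedContinuousFunction

variable {a b : ℝ} (h : a ≤ b)

noncomputable def projIcc : ℝ →ᵇ ℝ :=
  (mkOfCompact ⟨((↑) : Set.Icc a b → ℝ), continuous_subtype_val⟩).compContinuous
    ⟨Set.projIcc a b h, continuous_projIcc⟩

theorem projIcc_apply (x : ℝ) : projIcc h x = Set.projIcc a b h x := rfl

theorem monotone_projIcc : Monotone (projIcc h) :=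
  fun _ _ hxy ↦ Subtype.mono_coe _ (Set.monotone_projIcc h hxy)

theorem le_projIcc_sub_projIcc {x y ε : ℝ} (hε : 0 ≤ ε) (hay : a ≤ y) (hyb : y + ε ≤ b)
    (hxy : y + ε ≤ x) : ε ≤ projIcc h x - projIcc h y := by
  have hy : projIcc h y = y := by
    rw [projIcc_apply, Set.projIcc_of_mem h ⟨hay, by linarith⟩]
  have hyε : projIcc h (y + ε) = y + ε := by
    rw [projIcc_apply, Set.projIcc_of_mem h ⟨by linarith, hyb⟩]
  linarith [monotone_projIcc h hxy]

end BoundedContinuousFunction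

namespace MeasureTheory

variable {ι Ω Ω' : Type*} {mΩ : MeasurableSpace Ω} {mΩ' : MeasurableSpace Ω'}
  {μ : Measure Ω} {μ' : Measure Ω'} {l : Filter ι}

theorem TendstoInMeasure.sub {E : Type*} [SeminormedAddCommGroup E] {f g : ι → Ω → E}
    {f₀ g₀ : Ω → E} (hf : TendstoInMeasure μ f l f₀) (hg : TendstoInMeasure μ g l g₀) :
    TendstoInMeasure μ (f - g) l (f₀ - g₀) := by
  rw [tendstoInMeasure_iff_norm] at hf hg ⊢
  intro ε hε
  have hsum := (hf (ε / 2) (half_pos hε)).add (hg (ε / 2) (half_pos hε))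
  rw [add_zero] at hsum
  refine tendsto_of_tendsto_of_tendsto_of_le_of_le tendsto_const_nhds hsum (fun _ ↦ zero_le)
    fun i ↦ (measure_mono fun ω (hω : ε ≤ ‖f i ω - g i ω - (f₀ ω - g₀ ω)‖) ↦ ?_).trans
      (measure_union_le _ _)
  rw [sub_sub_sub_comm] at hω
  have := norm_sub_le (f i ω - f₀ ω) (g i ω - g₀ ω)
  rcases le_or_gt (ε / 2) ‖f i ω - f₀ ω‖ with hf' | hf'
  · exact Or.inl hf'
  · exact Or.inr (show ε / 2 ≤ ‖g i ω - g₀ ω‖ by linarith)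

theorem tendstoInMeasure_zero_of_ae_nonneg_of_tendsto_integral {f : ι → Ω → ℝ}
    (hf : ∀ i, Integrable (f i) μ) (hnonneg : ∀ i, 0 ≤ᵐ[μ] f i)
    (hint : Tendsto (fun i ↦ ∫ ω, f i ω ∂μ) l (𝓝 0)) :
    TendstoInMeasure μ f l 0 := by
  refine tendstoInMeasure_of_tendsto_eLpNorm one_ne_zero (fun i ↦ (hf i).aestronglyMeasurable)
    aestronglyMeasurable_zero ?_
  have hnorm : ∀ i, eLpNorm (f i) 1 μ = ENNReal.ofReal (∫ ω, f i ω ∂μ) := fun i ↦ by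
    rw [eLpNorm_one_eq_lintegral_enorm,
      ofReal_integral_eq_lintegral_ofReal (hf i) (hnonneg i)]
    exact lintegral_congr_ae ((hnonneg i).mono fun ω hω ↦ Real.enorm_eq_ofReal hω)
  simpa only [sub_zero, hnorm, ENNReal.ofReal_zero] using ENNReal.tendsto_ofReal hint

theorem tendstoInDistribution_iff_forall_tendsto_integral {E : Type*} [TopologicalSpace E]
    [MeasurableSpace E] [OpensMeasurableSpace E] [IsProbabilityMeasure μ]
    [IsProbabilityMeasure μ'] {X : ι → Ω → E} {Z : Ω' → E}
    (hX : ∀ i, AEMeasurable (X i) μ) (hZ : AEMeasurable Z μ') :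
    TendstoInDistribution X l Z (fun _ ↦ μ) μ' ↔
      ∀ f : E →ᵇ ℝ, Tendsto (fun i ↦ ∫ ω, f (X i ω) ∂μ) l (𝓝 (∫ ω, f (Z ω) ∂μ')) := by
  have hXf : ∀ i (f : E →ᵇ ℝ), ∫ x, f x ∂(μ.map (X i)) = ∫ ω, f (X i ω) ∂μ :=
    fun i f ↦ integral_map (hX i) f.continuous.aestronglyMeasurable
  have hZf : ∀ f : E →ᵇ ℝ, ∫ x, f x ∂(μ'.map Z) = ∫ ω, f (Z ω) ∂μ' :=
    fun f ↦ integral_map hZ f.continuous.aestronglyMeasurable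
  refine ⟨fun h f ↦ ?_, fun h ↦ ⟨hX, hZ, ?_⟩⟩
  · simpa only [ProbabilityMeasure.coe_mk, hXf, hZf] using
      ProbabilityMeasure.tendsto_iff_forall_integral_tendsto.1 h.tendsto f
  · refine ProbabilityMeasure.tendsto_iff_forall_integral_tendsto.2 fun f ↦ ?_
    simpa only [ProbabilityMeasure.coe_mk, hXf, hZf] using h f

theorem TendstoInDistribution.tendsto_integral_comp {E : Type*} [TopologicalSpace E]
    [MeasurableSpace E] [OpensMeasurableSpace E] [IsProbabilityMeasure μ]
    [IsProbabilityMeasure μ'] {X : ι → Ω → E} {Z : Ω' → E}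
    (h : TendstoInDistribution X l Z (fun _ ↦ μ) μ') (f : E →ᵇ ℝ) :
    Tendsto (fun i ↦ ∫ ω, f (X i ω) ∂μ) l (𝓝 (∫ ω, f (Z ω) ∂μ')) :=
  (tendstoInDistribution_iff_forall_tendsto_integral h.forall_aemeasurable
    h.aemeasurable_limit).1 h f

theorem TendstoInDistribution.exists_eventually_measure_norm_ge_lt {E : Type*}
    [SeminormedAddCommGroup E] [MeasurableSpace E] [OpensMeasurableSpace E]
    [IsProbabilityMeasure μ] [IsProbabilityMeasure μ'] {X : ι → Ω → E} {Z : Ω' → E}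
    (h : TendstoInDistribution X l Z (fun _ ↦ μ) μ') {r : ℝ≥0∞} (hr : 0 < r) :
    ∃ K : ℝ, 0 ≤ K ∧ ∀ᶠ i in l, μ {ω | K ≤ ‖X i ω‖} < r := by
  have hclosed (K : ℝ) : IsClosed {x : E | K ≤ ‖x‖} := isClosed_le continuous_const continuous_norm
  have htail : Tendsto (fun n : ℕ ↦ μ'.map Z {x | (n : ℝ) ≤ ‖x‖}) atTop (𝓝 0) := by
    have := tendsto_measure_iInter_atTop (μ := μ'.map Z)
      (fun n : ℕ ↦ (hclosed n).measurableSet.nullMeasurableSet)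
      (fun m n hmn x (hx : (n : ℝ) ≤ ‖x‖) ↦ (Nat.cast_le.2 hmn).trans hx) ⟨0, measure_ne_top _ _⟩
    rwa [Set.iInter_eq_empty_iff.2 fun x ↦ ?_, measure_empty] at this
    obtain ⟨n, hn⟩ := exists_nat_gt ‖x‖
    exact ⟨n, hn.not_ge⟩
  obtain ⟨N, hN⟩ := (htail.eventually_lt_const hr).exists
  refine ⟨N, N.cast_nonneg, ?_⟩
  have hlimsup := ProbabilityMeasure.limsup_measure_closed_le_of_tendsto h.tendsto (hclosed N)
  filter_upwards [eventually_lt_of_limsup_lt (hlimsup.trans_lt hN)] with i hi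
  rwa [ProbabilityMeasure.coe_mk,
    Measure.map_apply_of_aemeasurable (h.forall_aemeasurable i) (hclosed N).measurableSet] at hi

theorem tendstoInMeasure_comp_sub_comp_of_ae_le [IsProbabilityMeasure μ]
    [IsProbabilityMeasure μ'] {A B : ι → Ω → ℝ} {Z : Ω' → ℝ} (hle : ∀ i, B i ≤ᵐ[μ] A i)
    (hA : TendstoInDistribution A l Z (fun _ ↦ μ) μ')
    (hB : TendstoInDistribution B l Z (fun _ ↦ μ) μ') {g : ℝ →ᵇ ℝ} (hg : Monotone g) :
    TendstoInMeasure μ (fun i ω ↦ g (A i ω) - g (B i ω)) l 0 := by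
  have hint {C : ι → Ω → ℝ} (hC : TendstoInDistribution C l Z (fun _ ↦ μ) μ') (i : ι) :
      Integrable (fun ω ↦ g (C i ω)) μ :=
    (g.integrable (μ.map (C i))).comp_aemeasurable (hC.forall_aemeasurable i)
  refine tendstoInMeasure_zero_of_ae_nonneg_of_tendsto_integral
    (fun i ↦ (hint hA i).sub (hint hB i)) (fun i ↦ (hle i).mono fun ω hω ↦ sub_nonneg.2 (hg hω)) ?_
  have hlim := (hA.tendsto_integral_comp g).sub (hB.tendsto_integral_comp g)
  rw [sub_self] at hlim
  exact hlim.congr fun i ↦ (integral_sub (hint hA i) (hint hB i)).symm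

theorem tendstoInMeasure_sub_of_ae_le_of_tendstoInDistribution [IsProbabilityMeasure μ]
    [IsProbabilityMeasure μ'] {A B : ι → Ω → ℝ} {Z : Ω' → ℝ} (hle : ∀ i, B i ≤ᵐ[μ] A i)
    (hA : TendstoInDistribution A l Z (fun _ ↦ μ) μ')
    (hB : TendstoInDistribution B l Z (fun _ ↦ μ) μ') :
    TendstoInMeasure μ (A - B) l 0 := by
  refine tendstoInMeasure_iff_dist.2 fun ε hε ↦ ENNReal.tendsto_nhds_zero.2 fun r hr ↦ ?_
  obtain ⟨K, hK0, hK⟩ := hB.exists_eventually_measure_norm_ge_lt (ENNReal.half_pos hr.ne')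
  have hKε : -K ≤ K + ε := by linarith
  set g := BoundedContinuousFunction.projIcc hKε
  have hgap := tendstoInMeasure_comp_sub_comp_of_ae_le hle hA hB
    (BoundedContinuousFunction.monotone_projIcc hKε)
  filter_upwards [hK, (tendsto_order.1 (tendstoInMeasure_iff_dist.1 hgap ε hε)).2 (r / 2)
    (ENNReal.half_pos hr.ne')] with i hKi hgi
  calc μ {ω | ε ≤ dist ((A - B) i ω) ((0 : Ω → ℝ) ω)}
      ≤ μ ({ω | ε ≤ dist (g (A i ω) - g (B i ω)) 0} ∪ {ω | K ≤ ‖B i ω‖}) := by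
        refine measure_mono_ae ((hle i).mono fun ω hω hmem ↦ ?_)
        change ε ≤ dist (A i ω - B i ω) 0 at hmem
        change ε ≤ dist (g (A i ω) - g (B i ω)) 0 ∨ K ≤ ‖B i ω‖
        rw [Real.dist_0_eq_abs] at hmem ⊢
        rw [Real.norm_eq_abs]
        rcases lt_or_ge |B i ω| K with hBK | hBK
        · left
          rw [abs_of_nonneg (sub_nonneg.2 hω)] at hmem
          refine (BoundedContinuousFunction.le_projIcc_sub_projIcc hKε hε.le ?_ ?_ ?_).trans
            (le_abs_self _) <;> linarith [abs_lt.1 hBK]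
        · exact Or.inr hBK
    _ ≤ r / 2 + r / 2 := (measure_union_le _ _).trans (add_le_add hgi.le hKi.le)
    _ = r := ENNReal.add_halves r

end MeasureTheory

theorem slow_decorrelation_scheme
    {Ω : Type*} [MeasurableSpace Ω] (μ : Measure Ω) [IsProbabilityMeasure μ]
    (X Y Z : ℝ → Ω → ℝ)
    (hXm : ∀ t, Measurable (X t)) (hYm : ∀ t, Measurable (Y t))
    (hZm : ∀ t, Measurable (Z t))
    (hdom : ∀ t, ∀ᵐ ω ∂μ, X t ω ≤ Y t ω + Z t ω)
    (D : Measure ℝ) [IsProbabilityMeasure D]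
    (hXD : ∀ f : ℝ →ᵇ ℝ,
      Tendsto (fun t => ∫ ω, f (X t ω) ∂μ) atTop (nhds (∫ x, f x ∂D)))
    (hYD : ∀ f : ℝ →ᵇ ℝ,
      Tendsto (fun t => ∫ ω, f (Y t ω) ∂μ) atTop (nhds (∫ x, f x ∂D)))
    (hZ : TendstoInMeasure μ Z atTop 0) :
    TendstoInMeasure μ (fun t ω => X t ω - Y t ω) atTop 0 := by
  have hX : TendstoInDistribution X atTop id (fun _ ↦ μ) D :=
    (tendstoInDistribution_iff_forall_tendsto_integral (fun t ↦ (hXm t).aemeasurable)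
      aemeasurable_id).2 hXD
  have hY : TendstoInDistribution Y atTop id (fun _ ↦ μ) D :=
    (tendstoInDistribution_iff_forall_tendsto_integral (fun t ↦ (hYm t).aemeasurable)
      aemeasurable_id).2 hYD
  have hYZ : TendstoInDistribution (Y + Z) atTop id (fun _ ↦ μ) D :=
    tendstoInDistribution_of_tendstoInMeasure_sub _ _ hY (by simpa using hZ)
      fun t ↦ ((hYm t).add (hZm t)).aemeasurable
  have hgap : TendstoInMeasure μ (Y + Z - X) atTop 0 :=
    tendstoInMeasure_sub_of_ae_le_of_tendstoInDistribution hdom hYZ hX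
  have hdiff : Z - (Y + Z - X) = fun t ω ↦ X t ω - Y t ω := by
    ext t ω
    simp only [Pi.sub_apply, Pi.add_apply]
    ring
  simpa only [hdiff, sub_zero] using hZ.sub hgap
end
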